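/- arXiv:2210.04346 — 3 statements merged into one kernel-verified Lean document; each statement's English description precedes it below -/
import Mathlib

section
/- Suppose each Schur complement U₁,…,U_N is invertible. Then H_{[1,N]} − E is invertible and its top-right W×W block factorizes as G_{[1,N]}(1;N) = (−1)^{N−1} · U₁^{−1} T₁ U₂^{−1} T₂ ⋯ U_{N−1}^{−1} T_{N−1} U_N^{−1}. -/
open Matrix

/-- The `NW × NW` block-tridiagonal matrix with diagonal blocks `V 0, …, V (N-1)`,
superdiagonal blocks `T 0, …, T (N-2)` and subdiagonal blocks their transposes. -/
def bandH (W N : ℕ) (V T : ℕ → Matrix (Fin W) (Fin W) ℝ) :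
    Matrix (Fin N × Fin W) (Fin N × Fin W) ℝ :=
  Matrix.of fun x y =>
    if (x.1 : ℕ) = (y.1 : ℕ) then V x.1 x.2 y.2
    else if (x.1 : ℕ) + 1 = (y.1 : ℕ) then T x.1 x.2 y.2
    else if (y.1 : ℕ) + 1 = (x.1 : ℕ) then T y.1 y.2 x.2
    else 0

/-- The top-right `W × W` block of a block matrix indexed by `Fin N × Fin W`. -/
def topRight (W N : ℕ) (M : Matrix (Fin N × Fin W) (Fin N × Fin W) ℝ) :
    Matrix (Fin W) (Fin W) ℝ :=
  Matrix.of fun p q =>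
    if h : 0 < N then M (⟨0, h⟩, p) (⟨N - 1, Nat.sub_lt h Nat.one_pos⟩, q) else 0

/-- The Schur complements `U₁, U₂, …` (0-based: `schurU … k` is `U_{k+1}`). -/
noncomputable def schurU (W : ℕ) (E : ℝ) (V T : ℕ → Matrix (Fin W) (Fin W) ℝ) :
    ℕ → Matrix (Fin W) (Fin W) ℝ
  | 0 => V 0 - E • 1
  | n + 1 => V (n + 1) - E • 1 - (T n)ᵀ * (schurU W E V T n)⁻¹ * T n

/-- The ordered product `U₁⁻¹ T₁ U₂⁻¹ T₂ ⋯ Uₙ⁻¹ Tₙ U_{n+1}⁻¹`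
(0-based: `schurProd … n` ends with `U_{n+1}⁻¹`). -/
noncomputable def schurProd (W : ℕ) (E : ℝ) (V T : ℕ → Matrix (Fin W) (Fin W) ℝ) :
    ℕ → Matrix (Fin W) (Fin W) ℝ
  | 0 => (schurU W E V T 0)⁻¹
  | n + 1 => schurProd W E V T n * T n * (schurU W E V T (n + 1))⁻¹

/-!
Peel off the last block: `H_{[1,n+1]} - E = [[H_{[1,n]} - E, B], [Bᵀ, V_{n+1} - E]]` with
`B = e_n T_n`, where `e_n` embeds `ℝ^W` as the `n`-th block. Then
`Bᵀ G_{[1,n]} B = T_nᵀ G_{[1,n]}(n;n) T_n`, so once `G_{[1,n]}(n;n) = U_n⁻¹` the Schur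
complement of `H_{[1,n]} - E` in `H_{[1,n+1]} - E` is exactly `U_{n+1}`. The block-inverse
formula then gives `G_{[1,n+1]}(n+1;n+1) = U_{n+1}⁻¹` and
`G_{[1,n+1]}(1;n+1) = -G_{[1,n]}(1;n) T_n U_{n+1}⁻¹`, and both corner blocks are carried through
an induction on the number of blocks.
-/

namespace Matrix

variable {m n R : Type*} [Fintype m] [Fintype n] [DecidableEq m] [DecidableEq n] [CommRing R]

theorem isUnit_det_fromBlocks_of_isUnit_det {A : Matrix m m R} {B : Matrix m n R}
    {C : Matrix n m R} {D : Matrix n n R} (hA : IsUnit A.det)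
    (hS : IsUnit (D - C * A⁻¹ * B).det) : IsUnit (fromBlocks A B C D).det := by
  let := A.invertibleOfIsUnitDet hA
  rw [det_fromBlocks₁₁, invOf_eq_nonsing_inv]
  exact hA.mul hS

theorem inv_fromBlocks_of_isUnit_det {A : Matrix m m R} {B : Matrix m n R}
    {C : Matrix n m R} {D : Matrix n n R} (hA : IsUnit A.det)
    (hS : IsUnit (D - C * A⁻¹ * B).det) :
    (fromBlocks A B C D)⁻¹ =
      fromBlocks (A⁻¹ + A⁻¹ * B * (D - C * A⁻¹ * B)⁻¹ * C * A⁻¹)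
        (-(A⁻¹ * B * (D - C * A⁻¹ * B)⁻¹)) (-((D - C * A⁻¹ * B)⁻¹ * C * A⁻¹))
        (D - C * A⁻¹ * B)⁻¹ := by
  let := A.invertibleOfIsUnitDet hA
  let : Invertible (D - C * ⅟A * B) := by
    rw [invOf_eq_nonsing_inv]; exact (D - C * A⁻¹ * B).invertibleOfIsUnitDet hS
  let := fromBlocks₁₁Invertible A B C D
  rw [← invOf_eq_nonsing_inv, invOf_fromBlocks₁₁_eq]
  simp only [invOf_eq_nonsing_inv]

end Matrix

def finSuccProdEquiv (α : Type*) (n : ℕ) : (Fin n × α) ⊕ α ≃ Fin (n + 1) × α where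
  toFun := Sum.elim (fun x => (x.1.castSucc, x.2)) (fun a => (Fin.last n, a))
  invFun x := Fin.lastCases (Sum.inr x.2) (fun i => Sum.inl (i, x.2)) x.1
  left_inv := by rintro (⟨i, a⟩ | a) <;> simp
  right_inv := by
    rintro ⟨i, a⟩
    induction i using Fin.lastCases <;> simp

section finSuccProdEquiv

variable {α : Type*} {n : ℕ}

@[simp] lemma finSuccProdEquiv_inl (i : Fin n) (a : α) :
    finSuccProdEquiv α n (Sum.inl (i, a)) = (i.castSucc, a) := rfl

@[simp] lemma finSuccProdEquiv_inr (a : α) :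
    finSuccProdEquiv α n (Sum.inr a) = (Fin.last n, a) := rfl

@[simp] lemma finSuccProdEquiv_symm_castSucc (i : Fin n) (a : α) :
    (finSuccProdEquiv α n).symm (i.castSucc, a) = Sum.inl (i, a) :=
  (Equiv.symm_apply_eq _).2 rfl

@[simp] lemma finSuccProdEquiv_symm_last (a : α) :
    (finSuccProdEquiv α n).symm (Fin.last n, a) = Sum.inr a :=
  (Equiv.symm_apply_eq _).2 rfl

variable {R : Type*} (P : Matrix (Fin n × α) (Fin n × α) R) (Q : Matrix (Fin n × α) α R)
  (S : Matrix α (Fin n × α) R) (D : Matrix α α R)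

lemma submatrix_reindex_finSuccProdEquiv_castSucc_last (i : Fin n) :
    (reindex (finSuccProdEquiv α n) (finSuccProdEquiv α n) (fromBlocks P Q S D)).submatrix
      (i.castSucc, ·) (Fin.last n, ·) = Q.submatrix (i, ·) id := by
  ext a b
  simp

lemma submatrix_reindex_finSuccProdEquiv_last_last :
    (reindex (finSuccProdEquiv α n) (finSuccProdEquiv α n) (fromBlocks P Q S D)).submatrix
      (Fin.last n, ·) (Fin.last n, ·) = D := by
  ext a b
  simp

end finSuccProdEquiv

def blockCol {ι : Type*} [DecidableEq ι] (α : Type*) [DecidableEq α] (i : ι) :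
    Matrix (ι × α) α ℝ :=
  Matrix.of fun x a => if x = (i, a) then 1 else 0

section blockCol

variable {ι α β : Type*} [DecidableEq ι] [DecidableEq α] [Fintype ι] [Fintype α]

lemma mul_blockCol (M : Matrix β (ι × α) ℝ) (i : ι) :
    M * blockCol α i = M.submatrix id (i, ·) := by
  ext b a
  simp [blockCol, Matrix.mul_apply]

lemma transpose_blockCol_mul (M : Matrix (ι × α) β ℝ) (i : ι) :
    (blockCol α i)ᵀ * M = M.submatrix (i, ·) id := by
  ext a b
  simp [blockCol, Matrix.mul_apply]

lemma transpose_blockCol_mul_mul_blockCol (M : Matrix (ι × α) (ι × α) ℝ) (i j : ι) :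
    (blockCol α i)ᵀ * M * blockCol α j = M.submatrix (i, ·) (j, ·) := by
  rw [transpose_blockCol_mul, mul_blockCol, submatrix_submatrix]
  rfl

omit [Fintype ι] in
lemma blockCol_mul_apply (T : Matrix α α ℝ) (i : ι) (x : ι × α) (a : α) :
    (blockCol α i * T) x a = if x.1 = i then T x.2 a else 0 := by
  obtain ⟨j, b⟩ := x
  by_cases h : j = i <;> simp [blockCol, Matrix.mul_apply, h]

end blockCol

section bandH

variable (W : ℕ) (E : ℝ) (V T : ℕ → Matrix (Fin W) (Fin W) ℝ)

lemma bandH_succ_sub_smul_one (m : ℕ) :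
    bandH W (m + 2) V T - E • 1 =
      reindex (finSuccProdEquiv (Fin W) (m + 1)) (finSuccProdEquiv (Fin W) (m + 1))
        (fromBlocks (bandH W (m + 1) V T - E • 1) (blockCol (Fin W) (Fin.last m) * T m)
          (blockCol (Fin W) (Fin.last m) * T m)ᵀ (V (m + 1) - E • 1)) := by
  ext x y
  obtain ⟨⟨i, p⟩ | p, rfl⟩ := (finSuccProdEquiv (Fin W) (m + 1)).surjective x <;>
  obtain ⟨⟨j, q⟩ | q, rfl⟩ := (finSuccProdEquiv (Fin W) (m + 1)).surjective y <;>
  simp only [reindex_apply, submatrix_apply, Equiv.symm_apply_apply, fromBlocks_apply₁₁,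
    fromBlocks_apply₁₂, fromBlocks_apply₂₁, fromBlocks_apply₂₂, transpose_apply,
    blockCol_mul_apply] <;>
  simp [bandH, one_apply, Fin.ext_iff] <;> grind

lemma bandH_one_sub_smul_one :
    bandH W 1 V T - E • 1 =
      reindex (Equiv.uniqueProd (Fin W) (Fin 1)).symm (Equiv.uniqueProd (Fin W) (Fin 1)).symm
        (V 0 - E • 1) := by
  ext ⟨i, p⟩ ⟨j, q⟩
  simp [bandH, one_apply, Subsingleton.elim i 0, Subsingleton.elim j 0]

/-- Indices are 0-based: this is the theorem for `H_{[1,m+1]}`, together with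
`G_{[1,m+1]}(m+1;m+1) = U_{m+1}⁻¹`, which drives the induction. -/
def EdgeGreenBlocks (m : ℕ) : Prop :=
  IsUnit (bandH W (m + 1) V T - E • 1).det ∧
    (bandH W (m + 1) V T - E • 1)⁻¹.submatrix (0, ·) (Fin.last m, ·)
      = (-1 : ℝ) ^ m • schurProd W E V T m ∧
    (bandH W (m + 1) V T - E • 1)⁻¹.submatrix (Fin.last m, ·) (Fin.last m, ·)
      = (schurU W E V T m)⁻¹

variable {W E V T}

lemma edgeGreenBlocks_zero (hU : IsUnit (schurU W E V T 0).det) :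
    EdgeGreenBlocks W E V T 0 := by
  have hsplit := bandH_one_sub_smul_one W E V T
  refine ⟨by rwa [hsplit, det_reindex_self], ?_, ?_⟩ <;>
  · rw [hsplit, inv_reindex]
    ext p q
    simp [schurProd, schurU]

lemma edgeGreenBlocks_succ {m : ℕ} (h : EdgeGreenBlocks W E V T m)
    (hU : IsUnit (schurU W E V T (m + 1)).det) : EdgeGreenBlocks W E V T (m + 1) := by
  obtain ⟨hdet, htop, hbot⟩ := h
  set A := bandH W (m + 1) V T - E • 1
  set B := blockCol (Fin W) (Fin.last m) * T m
  have hschur : V (m + 1) - E • 1 - Bᵀ * A⁻¹ * B = schurU W E V T (m + 1) := by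
    have : Bᵀ * A⁻¹ * B = (T m)ᵀ * ((blockCol (Fin W) (Fin.last m))ᵀ * A⁻¹ *
        blockCol (Fin W) (Fin.last m)) * T m := by
      simp only [B, transpose_mul, Matrix.mul_assoc]
    rw [this, transpose_blockCol_mul_mul_blockCol, hbot]
    rfl
  have hS : IsUnit (V (m + 1) - E • 1 - Bᵀ * A⁻¹ * B).det := hschur ▸ hU
  have hsplit := bandH_succ_sub_smul_one W E V T m
  have hinv := inv_fromBlocks_of_isUnit_det hdet hS
  refine ⟨?_, ?_, ?_⟩
  · rw [hsplit, det_reindex_self]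
    exact isUnit_det_fromBlocks_of_isUnit_det hdet hS
  · rw [hsplit, inv_reindex, hinv, ← Fin.castSucc_zero',
      submatrix_reindex_finSuccProdEquiv_castSucc_last, hschur, ← transpose_blockCol_mul]
    calc (blockCol (Fin W) (0 : Fin (m + 1)))ᵀ * -(A⁻¹ * B * (schurU W E V T (m + 1))⁻¹)
        = -((blockCol (Fin W) (0 : Fin (m + 1)))ᵀ * A⁻¹ * blockCol (Fin W) (Fin.last m) * T m *
            (schurU W E V T (m + 1))⁻¹) := by
          simp only [B, Matrix.mul_neg, Matrix.mul_assoc]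
      _ = (-1 : ℝ) ^ (m + 1) • schurProd W E V T (m + 1) := by
          rw [transpose_blockCol_mul_mul_blockCol, htop, schurProd, pow_succ]
          simp only [smul_mul_assoc, mul_neg_one, neg_smul]
  · rw [hsplit, inv_reindex, hinv, submatrix_reindex_finSuccProdEquiv_last_last, hschur]

theorem edgeGreenBlocks (m : ℕ) (hU : ∀ k ≤ m, IsUnit (schurU W E V T k).det) :
    EdgeGreenBlocks W E V T m := by
  induction m with
  | zero => exact edgeGreenBlocks_zero (hU 0 le_rfl)
  | succ m ih =>
    exact edgeGreenBlocks_succ (ih fun k hk => hU k (hk.trans m.le_succ)) (hU (m + 1) le_rfl)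

end bandH

theorem statement4_general (W N : ℕ) (hN : 1 ≤ N) (E : ℝ) (V T : ℕ → Matrix (Fin W) (Fin W) ℝ)
    (hU : ∀ k, k < N → IsUnit (schurU W E V T k).det) :
    IsUnit (bandH W N V T - E • (1 : Matrix (Fin N × Fin W) (Fin N × Fin W) ℝ)).det ∧
    topRight W N ((bandH W N V T - E • (1 : Matrix (Fin N × Fin W) (Fin N × Fin W) ℝ))⁻¹)
      = (-1 : ℝ) ^ (N - 1) • schurProd W E V T (N - 1) := by
  obtain ⟨m, rfl⟩ : ∃ m, N = m + 1 := ⟨N - 1, by omega⟩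
  obtain ⟨hdet, htop, -⟩ := edgeGreenBlocks m fun k hk => hU k (Nat.lt_succ_of_le hk)
  refine ⟨hdet, ?_⟩
  rw [Nat.add_sub_cancel, ← htop]
  ext p q
  simp [topRight, Fin.last]

/-- Factorization of the Green function edge-to-edge block: if all Schur complements
`U₁, …, U_N` are invertible, then `H_{[1,N]} - E` is invertible and
`G_{[1,N]}(1;N) = (-1)^{N-1} U₁⁻¹ T₁ U₂⁻¹ T₂ ⋯ U_{N-1}⁻¹ T_{N-1} U_N⁻¹`. -/
theorem statement4 (W N : ℕ) (hN : 1 ≤ N) (E : ℝ) (V T : ℕ → Matrix (Fin W) (Fin W) ℝ)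
    (hsymm : ∀ k, (V k).IsSymm)
    (hU : ∀ k, k < N → IsUnit (schurU W E V T k).det) :
    IsUnit (bandH W N V T - E • (1 : Matrix (Fin N × Fin W) (Fin N × Fin W) ℝ)).det ∧
    topRight W N ((bandH W N V T - E • (1 : Matrix (Fin N × Fin W) (Fin N × Fin W) ℝ))⁻¹)
      = (-1 : ℝ) ^ (N - 1) • schurProd W E V T (N - 1) :=
  statement4_general W N hN E V T hU
end

section
/- Let η be a real random variable with mean 𝔞 = E[η] and variance σ² = Var(η) > 0, and suppose there is H > 0 such that |E[(η − 𝔞)ⁿ]| ≤ n! σ² H^{n−2} for every integer n ≥ 2. Then there is an absolute constant c > 0 (independent of η, σ, H) such that for every real t with |t| ≤ c min(H^{−1}, σ^{−1}), the exponential moments are finite and (E[e^{tη}])² ≤ E[e^{2tη}] · (1 − t²σ²/4). -/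
/-!
Centre `η` at its mean: `ξ = η - 𝔞`. Since `exp |y| ≤ 2 cosh y` and `cosh` only sees the even
moments, which are nonnegative, the moment bound makes `E cosh (u ξ)` finite for `|u| H < 1`;
dominated convergence then gives `E e^{u ξ} = ∑ uⁿ E ξⁿ / n!`. Terms of order `≥ 3` add up to at
most `2 σ² u² |u| H` once `|u| H ≤ 1/2`, so `E e^{t ξ} ≈ 1 + t²σ²/2` and `E e^{2t ξ} ≈ 1 + 2t²σ²`
up to errors `O(t²σ² |t| H)`. As `(1 + w/2)² ≤ (1 + 2w)(1 - w/4)` with room `3w(1 - w)/4`, the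
errors are absorbed for `|t| H, |t| σ ≤ 1/100`; undoing the centring multiplies both sides by
`e^{2t𝔞}`.
-/

open MeasureTheory ProbabilityTheory Real
open scoped Nat

namespace MeasureTheory

variable {α E : Type*} [MeasurableSpace α] {μ : Measure α} [NormedAddCommGroup E]

theorem Integrable.of_hasSum_of_summable_integral_norm {ι : Type*} [Countable ι] {F : ι → α → E}
    {f : α → E} (hf : AEStronglyMeasurable f μ) (hF : ∀ n, Integrable (F n) μ)
    (hsum : ∀ᵐ a ∂μ, HasSum (F · a) (f a)) (hF_sum : Summable fun n ↦ ∫ a, ‖F n a‖ ∂μ) :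
    Integrable f μ := by
  refine ⟨hf, ?_⟩
  calc ∫⁻ a, ‖f a‖ₑ ∂μ ≤ ∫⁻ a, ∑' n, ‖F n a‖ₑ ∂μ :=
        lintegral_mono_ae <| hsum.mono fun a ha ↦ ha.tsum_eq ▸ enorm_tsum_le_tsum_enorm
    _ = ∑' n, ENNReal.ofReal (∫ a, ‖F n a‖ ∂μ) := by
        rw [lintegral_tsum fun n ↦ (hF n).aestronglyMeasurable.enorm]
        simp_rw [ofReal_integral_norm_eq_lintegral_enorm (hF _)]
    _ = ENNReal.ofReal (∑' n, ∫ a, ‖F n a‖ ∂μ) :=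
        (ENNReal.ofReal_tsum_of_nonneg (fun n ↦ integral_nonneg fun _ ↦ norm_nonneg _) hF_sum).symm
    _ < ⊤ := ENNReal.ofReal_lt_top

end MeasureTheory

theorem sq_le_mul_one_sub_of_abs_sub_le {A B w : ℝ} (hw : 0 ≤ w) (hw' : w ≤ 1 / 2)
    (hA : |A - (1 + w / 2)| ≤ w / 50) (hB : |B - (1 + 2 * w)| ≤ 4 * w / 25) :
    A ^ 2 ≤ B * (1 - w / 4) := by
  obtain ⟨hA₁, hA₂⟩ := abs_le.mp hA
  obtain ⟨hB₁, -⟩ := abs_le.mp hB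
  calc A ^ 2 ≤ (1 + 13 / 25 * w) ^ 2 := pow_le_pow_left₀ (by linarith) (by linarith) 2
    _ ≤ (1 + 46 / 25 * w) * (1 - w / 4) := by nlinarith
    _ ≤ B * (1 - w / 4) := by gcongr <;> linarith

namespace ProbabilityTheory

variable {Ω : Type*} [MeasurableSpace Ω] {μ : Measure Ω} {X : Ω → ℝ} {V H u : ℝ}

theorem hasSum_integral_exp_mul (hX : AEStronglyMeasurable X μ)
    (h : Integrable (fun ω ↦ exp |u * X ω|) μ) :
    HasSum (fun n ↦ u ^ n * (∫ ω, X ω ^ n ∂μ) / n !) (∫ ω, exp (u * X ω) ∂μ) := by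
  have hexp (y : ℝ) : HasSum (fun n ↦ y ^ n / n !) (exp y) := by
    simpa [exp_eq_exp_ℝ] using NormedSpace.expSeries_div_hasSum_exp y
  have := hasSum_integral_of_dominated_convergence (μ := μ)
    (F := fun n ω ↦ (u * X ω) ^ n / n !) (fun n ω ↦ |u * X ω| ^ n / n !)
    (fun n ↦ by fun_prop) (fun n ↦ ae_of_all _ fun ω ↦ by simp)
    (ae_of_all _ fun ω ↦ (hexp _).summable) (by simpa only [(hexp _).tsum_eq] using h)
    (ae_of_all _ fun ω ↦ hexp _)
  simpa only [mul_pow, integral_div, integral_const_mul] using this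

theorem integrable_exp_abs_mul_of_even_moment_le
    (hint : ∀ n, Integrable (fun ω ↦ X ω ^ n) μ)
    (hmom : ∀ k, ∫ ω, X ω ^ (2 * k + 2) ∂μ ≤ (2 * k + 2)! * V * H ^ (2 * k))
    (hu : |u * H| < 1) :
    Integrable (fun ω ↦ exp |u * X ω|) μ := by
  have hX : AEStronglyMeasurable X μ := by simpa using (hint 1).aestronglyMeasurable
  set F : ℕ → Ω → ℝ := fun k ω ↦ u ^ (2 * k) * X ω ^ (2 * k) / (2 * k)!
  have hF_norm (k : ℕ) :
      ∫ ω, ‖F k ω‖ ∂μ = u ^ (2 * k) * (∫ ω, X ω ^ (2 * k) ∂μ) / (2 * k)! := by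
    have hF_nonneg (ω : Ω) : 0 ≤ F k ω := by simp only [F, pow_mul]; positivity
    simp only [Real.norm_of_nonneg (hF_nonneg _), F, integral_div, integral_const_mul]
  have hF_le (k : ℕ) : ∫ ω, ‖F (k + 1) ω‖ ∂μ ≤ u ^ 2 * V * ((u * H) ^ 2) ^ k := by
    rw [hF_norm, div_le_iff₀ (by positivity), show 2 * (k + 1) = 2 * k + 2 by ring]
    calc u ^ (2 * k + 2) * ∫ ω, X ω ^ (2 * k + 2) ∂μ
        ≤ u ^ (2 * k + 2) * ((2 * k + 2)! * V * H ^ (2 * k)) := by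
          gcongr
          · exact Even.pow_nonneg ⟨k + 1, by ring⟩ u
          · exact hmom k
      _ = u ^ 2 * V * ((u * H) ^ 2) ^ k * (2 * k + 2)! := by ring
  have hr : (u * H) ^ 2 < 1 := by nlinarith [abs_mul_abs_self (u * H), abs_nonneg (u * H)]
  have hcosh : Integrable (fun ω ↦ cosh (u * X ω)) μ := by
    refine .of_hasSum_of_summable_integral_norm (F := F) (by fun_prop)
      (fun k ↦ ((hint _).const_mul _).div_const _) (ae_of_all _ fun ω ↦ ?_) ?_
    · simpa only [F, mul_pow] using hasSum_cosh (u * X ω)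
    · rw [← summable_nat_add_iff 1]
      exact .of_nonneg_of_le (fun k ↦ integral_nonneg fun _ ↦ norm_nonneg _) hF_le
        ((summable_geometric_of_lt_one (sq_nonneg _) hr).mul_left _)
  refine (hcosh.const_mul 2).mono' (by fun_prop) (ae_of_all _ fun ω ↦ ?_)
  simpa [cosh_eq, mul_div_cancel₀] using exp_abs_le (u * X ω)

section Bernstein

variable (hint : ∀ n, Integrable (fun ω ↦ X ω ^ n) μ)
  (hmom : ∀ n, 2 ≤ n → |∫ ω, X ω ^ n ∂μ| ≤ n ! * V * H ^ (n - 2))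
include hint hmom

theorem integrable_exp_abs_mul_of_moment_le (hH : 0 ≤ H) (hu : |u| * H < 1) :
    Integrable (fun ω ↦ exp |u * X ω|) μ := by
  refine integrable_exp_abs_mul_of_even_moment_le (V := V) (H := H) hint (fun k ↦ ?_) ?_
  · simpa using (le_abs_self _).trans (hmom (2 * k + 2) (by omega))
  · rwa [abs_mul, abs_of_nonneg hH]

theorem integrable_exp_mul_of_moment_le (hH : 0 ≤ H) (hu : |u| * H < 1) :
    Integrable (fun ω ↦ exp (u * X ω)) μ := by
  have hX : AEStronglyMeasurable X μ := by simpa using (hint 1).aestronglyMeasurable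
  refine (integrable_exp_abs_mul_of_moment_le hint hmom hH hu).mono' (by fun_prop)
    (ae_of_all _ fun ω ↦ ?_)
  simpa using le_abs_self (u * X ω)

theorem abs_integral_exp_mul_sub_le [IsProbabilityMeasure μ] (h0 : ∫ ω, X ω ∂μ = 0)
    (h2 : ∫ ω, X ω ^ 2 ∂μ = V) (hH : 0 ≤ H) (hu : |u| * H ≤ 1 / 2) :
    |∫ ω, exp (u * X ω) ∂μ - (1 + u ^ 2 * V / 2)| ≤ 2 * V * u ^ 2 * (|u| * H) := by
  have hX : AEStronglyMeasurable X μ := by simpa using (hint 1).aestronglyMeasurable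
  have hV : 0 ≤ V := h2 ▸ integral_nonneg fun ω ↦ sq_nonneg (X ω)
  set r := |u| * H
  have hr : 0 ≤ r := by positivity
  have hseries := hasSum_integral_exp_mul hX
    (integrable_exp_abs_mul_of_moment_le hint hmom hH (by linarith))
  have htail : HasSum (fun n ↦ u ^ (n + 3) * (∫ ω, X ω ^ (n + 3) ∂μ) / (n + 3)!)
      (∫ ω, exp (u * X ω) ∂μ - (1 + u ^ 2 * V / 2)) := by
    have hhead : ∑ n ∈ Finset.range 3, u ^ n * (∫ ω, X ω ^ n ∂μ) / n ! = 1 + u ^ 2 * V / 2 := by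
      simp [Finset.sum_range_succ, h0, h2]
    simpa only [hhead] using (hasSum_nat_add_iff' 3).mpr hseries
  have hterm (n : ℕ) :
      ‖u ^ (n + 3) * (∫ ω, X ω ^ (n + 3) ∂μ) / (n + 3)!‖ ≤ V * u ^ 2 * r * r ^ n := by
    rw [Real.norm_eq_abs, abs_div, abs_mul, abs_pow, Nat.abs_cast, div_le_iff₀ (by positivity)]
    calc |u| ^ (n + 3) * |∫ ω, X ω ^ (n + 3) ∂μ|
        ≤ |u| ^ (n + 3) * ((n + 3)! * V * H ^ (n + 1)) := by
          gcongr
          simpa using hmom (n + 3) (by omega)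
      _ = V * u ^ 2 * r * r ^ n * (n + 3)! := by rw [← sq_abs u]; ring
  calc |∫ ω, exp (u * X ω) ∂μ - (1 + u ^ 2 * V / 2)|
      ≤ V * u ^ 2 * r * (1 - r)⁻¹ :=
        htail.norm_le_of_bounded ((hasSum_geometric_of_lt_one hr (by linarith)).mul_left _) hterm
    _ ≤ V * u ^ 2 * r * 2 := by
        gcongr
        rw [inv_le_comm₀ (by linarith) two_pos]
        linarith
    _ = 2 * V * u ^ 2 * r := by ring

theorem sq_integral_exp_mul_le [IsProbabilityMeasure μ] {t : ℝ} (h0 : ∫ ω, X ω ∂μ = 0)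
    (h2 : ∫ ω, X ω ^ 2 ∂μ = V) (hH : 0 ≤ H) (htH : |t| * H ≤ 1 / 100) (htV : t ^ 2 * V ≤ 1 / 2) :
    (∫ ω, exp (t * X ω) ∂μ) ^ 2 ≤ (∫ ω, exp (2 * t * X ω) ∂μ) * (1 - t ^ 2 * V / 4) := by
  have hV : 0 ≤ V := h2 ▸ integral_nonneg fun ω ↦ sq_nonneg (X ω)
  have hw : 0 ≤ t ^ 2 * V := by positivity
  have hA := abs_integral_exp_mul_sub_le hint hmom h0 h2 hH (u := t) (by linarith)
  have hB := abs_integral_exp_mul_sub_le hint hmom h0 h2 hH (u := 2 * t)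
    (by rw [abs_mul, abs_two]; linarith)
  refine sq_le_mul_one_sub_of_abs_sub_le hw htV (hA.trans ?_) ?_
  · nlinarith [mul_le_mul_of_nonneg_left htH hw]
  · rw [show (2 * t) ^ 2 * V / 2 = 2 * (t ^ 2 * V) by ring, abs_mul, abs_two] at hB
    refine hB.trans ?_
    nlinarith [mul_le_mul_of_nonneg_left htH hw]

end Bernstein

end ProbabilityTheory

/-- Exponential-moment comparison under a Bernstein-type moment condition: if
`|E[(η - 𝔞)ⁿ]| ≤ n! σ² H^{n-2}` for all `n ≥ 2`, then for `|t| ≤ c min(H⁻¹, σ⁻¹)`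
(with an absolute constant `c > 0`) the exponential moments are finite and
`(E[e^{tη}])² ≤ E[e^{2tη}] (1 - t²σ²/4)`. -/
theorem statement18 :
    ∃ c : ℝ, 0 < c ∧
      ∀ (Ω : Type) [MeasureSpace Ω], IsProbabilityMeasure (ℙ : Measure Ω) →
      ∀ (η : Ω → ℝ) (H : ℝ), 0 < H →
        Integrable η ℙ →
        0 < variance η ℙ →
        (∀ n : ℕ, 2 ≤ n → Integrable (fun ω => (η ω - ∫ ω', η ω') ^ n) ℙ) →
        (∀ n : ℕ, 2 ≤ n →
          |∫ ω, (η ω - ∫ ω', η ω') ^ n|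
            ≤ (n.factorial : ℝ) * variance η ℙ * H ^ (n - 2)) →
        ∀ t : ℝ, |t| ≤ c * min H⁻¹ (Real.sqrt (variance η ℙ))⁻¹ →
          Integrable (fun ω => Real.exp (t * η ω)) ℙ ∧
          Integrable (fun ω => Real.exp (2 * t * η ω)) ℙ ∧
          (∫ ω, Real.exp (t * η ω)) ^ 2
            ≤ (∫ ω, Real.exp (2 * t * η ω)) * (1 - t ^ 2 * variance η ℙ / 4) := by
  refine ⟨1 / 100, by norm_num, fun Ω _ _ η H hH hη hVar hIntPow hMom t ht ↦ ?_⟩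
  set V := variance η ℙ
  set a := ∫ ω, η ω
  have hint : ∀ n, Integrable (fun ω ↦ (η ω - a) ^ n) ℙ
    | 0 => by simp
    | 1 => by simp only [pow_one]; exact hη.sub (integrable_const a)
    | n + 2 => hIntPow (n + 2) (by omega)
  have h0 : ∫ ω, (η ω - a) = 0 := by simp [integral_sub hη (integrable_const a), a]
  have h2 : ∫ ω, (η ω - a) ^ 2 = V := (variance_eq_integral hη.aemeasurable).symm
  have htH : |t| * H ≤ 1 / 100 := by
    have := ht.trans (mul_le_mul_of_nonneg_left (min_le_left _ _) (by norm_num))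
    rwa [← div_eq_mul_inv, le_div_iff₀ hH] at this
  have htV : t ^ 2 * V ≤ 1 / 2 := by
    have := ht.trans (mul_le_mul_of_nonneg_left (min_le_right _ _) (by norm_num))
    rw [← div_eq_mul_inv, le_div_iff₀ (sqrt_pos.mpr hVar)] at this
    nlinarith [sq_abs t, sq_sqrt hVar.le, mul_nonneg (abs_nonneg t) (sqrt_nonneg V)]
  have hshift (s : ℝ) : (fun ω ↦ exp (s * η ω)) = fun ω ↦ exp (s * a) * exp (s * (η ω - a)) :=
    funext fun ω ↦ by rw [← exp_add]; ring_nf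
  refine ⟨?_, ?_, ?_⟩
  · rw [hshift]
    exact (integrable_exp_mul_of_moment_le hint hMom hH.le (by linarith)).const_mul _
  · rw [hshift]
    exact (integrable_exp_mul_of_moment_le hint hMom hH.le
      (by rw [abs_mul, abs_two]; linarith)).const_mul _
  · rw [hshift, hshift, integral_const_mul, integral_const_mul, mul_pow, mul_assoc,
      show exp (2 * t * a) = exp (t * a) ^ 2 by rw [sq, ← exp_add]; ring_nf]
    exact mul_le_mul_of_nonneg_left
      (sq_integral_exp_mul_le hint hMom h0 h2 hH.le htH htV) (sq_nonneg _)
end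

section
/- Let η₁,…,η_N be independent real random variables, each with finite mean and variance σ_k² = Var(η_k) > 0, and suppose there is H > 0 such that for every k and every integer n ≥ 2, |E[(η_k − E[η_k])ⁿ]| ≤ n! σ_k² H^{n−2}. Set L = η₁ + ⋯ + η_N. Then there is an absolute constant c > 0 such that for every real t with |t| ≤ c min(H^{−1}, min_k σ_k^{−1}), (E[e^{tL}])² ≤ E[e^{2tL}] · ∏_{k=1}^{N} (1 − t²σ_k²/4). -/
/-!
Write `X = η - E η` and `v = t² Var η`. Bernstein's condition makes the series
`E e^{sX} = Σ sⁿ E Xⁿ / n!` converge for `|s| H < 1` and bounds its terms beyond the quadratic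
one by a geometric series, so `|E e^{sX} - 1 - s² Var η / 2| ≤ 2 Var η |s|³ H` once
`|s| H ≤ 1/2`. With `w = Var η |t|³ H ≤ v / 40` this gives, for each variable,
`(E e^{tX})² ≤ (1 + v/2 + 2w)² ≤ (1 + 2v - 16w) (1 - v/4) ≤ E e^{2tX} (1 - v/4)`.
The means cancel between `(E e^{tη})²` and `E e^{2tη}`, and independence factorises the
moment generating function of the sum.
-/

open MeasureTheory ProbabilityTheory Real Finset
open scoped Nat

variable {Ω : Type*} [MeasurableSpace Ω] {μ : Measure Ω}

lemma integrable_of_hasSum_of_nonneg {F : ℕ → Ω → ℝ} {f : Ω → ℝ}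
    (hF : ∀ n, Integrable (F n) μ) (hF0 : ∀ n ω, 0 ≤ F n ω)
    (hf : ∀ ω, HasSum (fun n ↦ F n ω) (f ω)) (hS : Summable fun n ↦ ∫ ω, F n ω ∂μ) :
    Integrable f μ := by
  refine ⟨aestronglyMeasurable_of_tendsto_ae _
    (fun n ↦ (integrable_finsetSum (range n) fun i _ ↦ hF i).aestronglyMeasurable)
    (ae_of_all _ fun ω ↦ (hf ω).tendsto_sum_nat), ?_⟩
  rw [hasFiniteIntegral_iff_ofReal (ae_of_all _ fun ω ↦ (hf ω).nonneg (hF0 · ω))]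
  calc ∫⁻ ω, ENNReal.ofReal (f ω) ∂μ = ∫⁻ ω, ∑' n, ENNReal.ofReal (F n ω) ∂μ := by
        congr with ω
        rw [← (hf ω).tsum_eq, ENNReal.ofReal_tsum_of_nonneg (hF0 · ω) (hf ω).summable]
    _ = ∑' n, ENNReal.ofReal (∫ ω, F n ω ∂μ) := by
        rw [lintegral_tsum fun n ↦ (hF n).aemeasurable.ennreal_ofReal]
        congr with n
        rw [ofReal_integral_eq_lintegral_ofReal (hF n) (ae_of_all _ (hF0 n))]
    _ = ENNReal.ofReal (∑' n, ∫ ω, F n ω ∂μ) :=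
        (ENNReal.ofReal_tsum_of_nonneg (fun n ↦ integral_nonneg (hF0 n)) hS).symm
    _ < ⊤ := ENNReal.ofReal_lt_top

lemma integral_mul_pow_div_factorial (X : Ω → ℝ) (s : ℝ) (n : ℕ) :
    ∫ ω, ((s * X ω) ^ n / n !) ∂μ = s ^ n * (∫ ω, X ω ^ n ∂μ) / n ! := by
  simp only [mul_pow, integral_div, integral_const_mul]

structure BernsteinMomentCondition (X : Ω → ℝ) (μ : Measure Ω) (V H : ℝ) : Prop where
  integrable_pow : ∀ n : ℕ, 2 ≤ n → Integrable (fun ω ↦ X ω ^ n) μ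
  abs_integral_pow_le : ∀ n : ℕ, 2 ≤ n → |∫ ω, X ω ^ n ∂μ| ≤ n ! * V * H ^ (n - 2)

namespace BernsteinMomentCondition

variable {X : Ω → ℝ} {V H s : ℝ}

lemma nonneg (h : BernsteinMomentCondition X μ V H) : 0 ≤ V := by
  have := (abs_nonneg _).trans (h.abs_integral_pow_le 2 le_rfl)
  norm_num at this
  linarith

lemma abs_mul_integral_pow_div_factorial_le (h : BernsteinMomentCondition X μ V H) {n : ℕ}
    (hn : 2 ≤ n) (s : ℝ) : |s ^ n * (∫ ω, X ω ^ n ∂μ) / n !| ≤ V * s ^ 2 * (|s| * H) ^ (n - 2) := by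
  obtain ⟨m, rfl⟩ := Nat.exists_eq_add_of_le' hn
  have hfac : (0 : ℝ) < (m + 2)! := by positivity
  rw [abs_div, abs_mul, abs_pow, Nat.abs_cast, div_le_iff₀ hfac, Nat.add_sub_cancel]
  calc |s| ^ (m + 2) * |∫ ω, X ω ^ (m + 2) ∂μ|
      ≤ |s| ^ (m + 2) * ((m + 2)! * V * H ^ m) := by
        gcongr
        simpa using h.abs_integral_pow_le (m + 2) hn
    _ = V * s ^ 2 * (|s| * H) ^ m * (m + 2)! := by
        rw [mul_pow, pow_add, sq_abs]
        ring

/- Only even moments enter the series of `cosh`, whose terms are nonnegative, so no bound on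
absolute odd moments is needed. -/
lemma integrable_cosh_mul [IsFiniteMeasure μ] (h : BernsteinMomentCondition X μ V H)
    (hH : 0 ≤ H) (hs : |s| * H < 1) : Integrable (fun ω ↦ cosh (s * X ω)) μ := by
  refine integrable_of_hasSum_of_nonneg (F := fun n ω ↦ (s * X ω) ^ (2 * n) / (2 * n)!)
    (fun n ↦ ?_) (fun n ω ↦ div_nonneg ((even_two_mul n).pow_nonneg _) (by positivity))
    (fun ω ↦ hasSum_cosh _) ?_
  · rcases n with _ | n
    · simp
    · simp only [mul_pow]
      exact ((h.integrable_pow _ (by omega)).const_mul _).div_const _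
  · simp only [integral_mul_pow_div_factorial]
    refine (summable_nat_add_iff 1).mp (Summable.of_norm_bounded
      ((summable_geometric_of_lt_one (r := (|s| * H) ^ 2) (by positivity) ?_).mul_left
        (V * s ^ 2)) fun n ↦ ?_)
    · exact pow_lt_one₀ (by positivity) hs two_ne_zero
    · rw [Real.norm_eq_abs, ← pow_mul]
      simpa only [mul_add_one, Nat.add_sub_cancel] using
        h.abs_mul_integral_pow_div_factorial_le (n := 2 * (n + 1)) (by omega) s

lemma integrable_exp_abs_mul [IsFiniteMeasure μ] (h : BernsteinMomentCondition X μ V H)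
    (hX : AEMeasurable X μ) (hH : 0 ≤ H) (hs : |s| * H < 1) :
    Integrable (fun ω ↦ exp |s * X ω|) μ := by
  refine ((h.integrable_cosh_mul hH hs).const_mul 2).mono' (by fun_prop)
    (ae_of_all _ fun ω ↦ ?_)
  rw [Real.norm_of_nonneg (exp_pos _).le, cosh_eq]
  linarith [exp_abs_le (s * X ω)]

lemma hasSum_mgf [IsFiniteMeasure μ] (h : BernsteinMomentCondition X μ V H)
    (hX : AEMeasurable X μ) (hH : 0 ≤ H) (hs : |s| * H < 1) :
    HasSum (fun n ↦ s ^ n * (∫ ω, X ω ^ n ∂μ) / n !) (mgf X μ s) := by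
  have hexp (x : ℝ) : HasSum (fun n ↦ x ^ n / n !) (exp x) := by
    rw [exp_eq_exp_ℝ]
    exact NormedSpace.expSeries_div_hasSum_exp x
  simp only [← integral_mul_pow_div_factorial, mgf]
  refine hasSum_integral_of_dominated_convergence (fun n ω ↦ |s * X ω| ^ n / n !)
    (fun n ↦ by fun_prop) (fun n ↦ ae_of_all _ fun ω ↦ ?_)
    (ae_of_all _ fun ω ↦ summable_pow_div_factorial _) ?_ (ae_of_all _ fun ω ↦ hexp _)
  · rw [norm_div, norm_pow, Real.norm_eq_abs, Real.norm_natCast]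
  · simpa only [(hexp _).tsum_eq] using h.integrable_exp_abs_mul hX hH hs

lemma abs_mgf_sub_le [IsProbabilityMeasure μ] (h : BernsteinMomentCondition X μ V H)
    (hX : AEMeasurable X μ) (hX0 : ∫ ω, X ω ∂μ = 0) (hH : 0 ≤ H) (hs : |s| * H ≤ 1 / 2) :
    |mgf X μ s - (1 + s ^ 2 * (∫ ω, X ω ^ 2 ∂μ) / 2)| ≤ 2 * V * |s| ^ 3 * H := by
  set r := |s| * H
  have hr : 0 ≤ r := by positivity
  have hhead : ∑ n ∈ range 3, s ^ n * (∫ ω, X ω ^ n ∂μ) / n ! =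
      1 + s ^ 2 * (∫ ω, X ω ^ 2 ∂μ) / 2 := by
    simp [sum_range_succ, hX0]
  have htail := (hasSum_nat_add_iff' 3).mpr (h.hasSum_mgf hX hH (by linarith))
  rw [hhead] at htail
  have hgeom := (hasSum_geometric_of_lt_one hr (by linarith)).mul_left (V * s ^ 2 * r)
  refine (htail.norm_le_of_bounded hgeom fun n ↦ ?_).trans ?_
  · have := h.abs_mul_integral_pow_div_factorial_le (n := n + 3) (by omega) s
    rwa [show n + 3 - 2 = n + 1 by omega, pow_succ' (|s| * H), ← mul_assoc,
      ← Real.norm_eq_abs] at this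
  · have hinv : (1 - r)⁻¹ ≤ 2 := by
      rw [inv_le_comm₀ (by linarith) two_pos]
      linarith
    calc V * s ^ 2 * r * (1 - r)⁻¹ ≤ V * s ^ 2 * r * 2 := by
          have := h.nonneg
          gcongr
      _ = 2 * V * |s| ^ 3 * H := by
          rw [← sq_abs s]
          ring

lemma integrable_exp_mul [IsFiniteMeasure μ] (h : BernsteinMomentCondition X μ V H)
    (hX : AEMeasurable X μ) (hH : 0 ≤ H) (hs : |s| * H < 1) :
    Integrable (fun ω ↦ exp (s * X ω)) μ :=
  (h.integrable_exp_abs_mul hX hH hs).mono' (by fun_prop) (ae_of_all _ fun ω ↦ by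
    rw [Real.norm_of_nonneg (exp_pos _).le]
    exact exp_le_exp.2 (le_abs_self _))

lemma sq_mgf_le_mgf_two_mul [IsProbabilityMeasure μ] (h : BernsteinMomentCondition X μ V H)
    (hX : AEMeasurable X μ) (hX0 : ∫ ω, X ω ∂μ = 0) (hV : ∫ ω, X ω ^ 2 ∂μ = V) (hH : 0 ≤ H)
    {t : ℝ} (ht : |t| * H ≤ 1 / 40) (htV : t ^ 2 * V ≤ 1 / 1600) :
    mgf X μ t ^ 2 ≤ mgf X μ (2 * t) * (1 - t ^ 2 * V / 4) := by
  have h1 := abs_le.1 (h.abs_mgf_sub_le hX hX0 hH (s := t) (by linarith))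
  have h2 := abs_le.1 (h.abs_mgf_sub_le hX hX0 hH (s := 2 * t)
    (by rw [abs_mul, abs_two]; linarith))
  rw [hV] at h1 h2
  set v := t ^ 2 * V
  set w := V * |t| ^ 3 * H
  have hv : 0 ≤ v := by have := h.nonneg; positivity
  have hw : w ≤ v / 40 := by
    calc w = v * (|t| * H) := by simp only [v, w]; rw [← sq_abs t]; ring
      _ ≤ v * (1 / 40) := by gcongr
      _ = v / 40 := by ring
  have hw0 : 0 ≤ w := by have := h.nonneg; positivity
  have hupper : mgf X μ t ≤ 1 + v / 2 + 2 * w := by linarith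
  have hlower : 1 + 2 * v - 16 * w ≤ mgf X μ (2 * t) := by
    have : 2 * V * |2 * t| ^ 3 * H = 16 * w := by rw [abs_mul, abs_two]; ring
    have : (2 * t) ^ 2 * V / 2 = 2 * v := by ring
    linarith
  calc mgf X μ t ^ 2 ≤ (1 + v / 2 + 2 * w) ^ 2 := by gcongr; exact mgf_nonneg
    -- at worst `w = v / 40`, leaving `v / 4 - 0.7025 v² ≥ 0` because `v ≤ 1 / 1600`
    _ ≤ (1 + 2 * v - 16 * w) * (1 - v / 4) := by nlinarith
    _ ≤ mgf X μ (2 * t) * (1 - v / 4) := by gcongr; linarith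

end BernsteinMomentCondition

section Centering

variable {Y : Ω → ℝ} {V H : ℝ}

lemma integrable_exp_mul_of_bernstein_sub_integral [IsFiniteMeasure μ]
    (h : BernsteinMomentCondition (fun ω ↦ Y ω - ∫ ω', Y ω' ∂μ) μ V H) (hY : AEMeasurable Y μ)
    (hH : 0 ≤ H) {s : ℝ} (hs : |s| * H < 1) : Integrable (fun ω ↦ exp (s * Y ω)) μ := by
  refine ((h.integrable_exp_mul (hY.sub_const _) hH hs).mul_const
    (exp (s * ∫ ω', Y ω' ∂μ))).congr (ae_of_all _ fun ω ↦ ?_)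
  dsimp only
  rw [← exp_add]
  ring_nf

lemma sq_mgf_le_mgf_two_mul_of_bernstein_sub_integral [IsProbabilityMeasure μ]
    (hY : Integrable Y μ)
    (h : BernsteinMomentCondition (fun ω ↦ Y ω - ∫ ω', Y ω' ∂μ) μ (variance Y μ) H)
    (hH : 0 ≤ H) {t : ℝ} (ht : |t| * H ≤ 1 / 40) (htV : t ^ 2 * variance Y μ ≤ 1 / 1600) :
    mgf Y μ t ^ 2 ≤ mgf Y μ (2 * t) * (1 - t ^ 2 * variance Y μ / 4) := by
  set m := ∫ ω, Y ω ∂μ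
  have hshift (u : ℝ) : mgf Y μ u = mgf (fun ω ↦ Y ω - m) μ u * exp (u * m) := by
    rw [← mgf_add_const]
    simp
  have hX0 : ∫ ω, (Y ω - m) ∂μ = 0 := by simp [integral_sub hY (integrable_const m), m]
  have hcentered := h.sq_mgf_le_mgf_two_mul (hY.aemeasurable.sub_const m) hX0
    (variance_eq_integral hY.aemeasurable).symm hH ht htV
  rw [hshift, hshift, mul_pow, ← exp_nat_mul, Nat.cast_two, ← mul_assoc]
  calc mgf (fun ω ↦ Y ω - m) μ t ^ 2 * exp (2 * t * m)
      ≤ mgf (fun ω ↦ Y ω - m) μ (2 * t) * (1 - t ^ 2 * variance Y μ / 4)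
          * exp (2 * t * m) := by gcongr
    _ = _ := by ring

end Centering

theorem ProbabilityTheory.iIndepFun.sq_mgf_sum_le {ι : Type*} {η : ι → Ω → ℝ}
    (hindep : iIndepFun η μ) (hmeas : ∀ i, Measurable (η i)) (s : Finset ι) {t : ℝ}
    {a : ι → ℝ} (h : ∀ i ∈ s, mgf (η i) μ t ^ 2 ≤ mgf (η i) μ (2 * t) * a i) :
    mgf (∑ i ∈ s, η i) μ t ^ 2 ≤ mgf (∑ i ∈ s, η i) μ (2 * t) * ∏ i ∈ s, a i := by
  rw [hindep.mgf_sum hmeas, hindep.mgf_sum hmeas, ← prod_pow, ← prod_mul_distrib]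
  exact prod_le_prod (fun _ _ ↦ sq_nonneg _) h

lemma sq_mul_le_sq_of_abs_le_mul_inv_sqrt {t c V : ℝ} (hV : 0 ≤ V)
    (ht : |t| ≤ c * (√V)⁻¹) : t ^ 2 * V ≤ c ^ 2 := by
  rcases hV.eq_or_lt with rfl | hV
  · simpa using sq_nonneg c
  calc t ^ 2 * V = (|t| * √V) ^ 2 := by rw [mul_pow, sq_abs, sq_sqrt hV.le]
    _ ≤ c ^ 2 := by gcongr; exact (le_mul_inv_iff₀ (sqrt_pos.2 hV)).1 ht

/-- Exponential-moment comparison for sums of independent variables satisfying a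
Bernstein-type moment condition: with `L = η₁ + ⋯ + η_N`, for
`|t| ≤ c min(H⁻¹, min_k σ_k⁻¹)` (with an absolute constant `c > 0`) one has
`(E[e^{tL}])² ≤ E[e^{2tL}] ∏_k (1 - t²σ_k²/4)`. -/
theorem statement19 :
    ∃ c : ℝ, 0 < c ∧
      ∀ (Ω : Type) [MeasureSpace Ω], IsProbabilityMeasure (ℙ : Measure Ω) →
      ∀ (N : ℕ) (η : Fin N → Ω → ℝ) (H : ℝ), 0 < H →
        (∀ k, Measurable (η k)) →
        iIndepFun η ℙ →
        (∀ k, Integrable (η k) ℙ) →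
        (∀ k, 0 < variance (η k) ℙ) →
        (∀ k, ∀ n : ℕ, 2 ≤ n →
          Integrable (fun ω => (η k ω - ∫ ω', η k ω') ^ n) ℙ) →
        (∀ k, ∀ n : ℕ, 2 ≤ n →
          |∫ ω, (η k ω - ∫ ω', η k ω') ^ n|
            ≤ (n.factorial : ℝ) * variance (η k) ℙ * H ^ (n - 2)) →
        ∀ t : ℝ, |t| ≤ c * H⁻¹ →
          (∀ k, |t| ≤ c * (Real.sqrt (variance (η k) ℙ))⁻¹) →
          Integrable (fun ω => Real.exp (t * ∑ k, η k ω)) ℙ ∧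
          Integrable (fun ω => Real.exp (2 * t * ∑ k, η k ω)) ℙ ∧
          (∫ ω, Real.exp (t * ∑ k, η k ω)) ^ 2
            ≤ (∫ ω, Real.exp (2 * t * ∑ k, η k ω))
                * ∏ k, (1 - t ^ 2 * variance (η k) ℙ / 4) := by
  refine ⟨1 / 40, by norm_num, fun Ω _ _ N η H hH hmeas hindep hint _ hintn hmom t htH htσ ↦ ?_⟩
  have hB k : BernsteinMomentCondition (fun ω ↦ η k ω - ∫ ω', η k ω') ℙ (variance (η k) ℙ) H :=
    ⟨hintn k, hmom k⟩
  have htH' : |t| * H ≤ 1 / 40 := (le_mul_inv_iff₀ hH).1 htH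
  have htV k : t ^ 2 * variance (η k) ℙ ≤ 1 / 1600 :=
    (sq_mul_le_sq_of_abs_le_mul_inv_sqrt (variance_nonneg _ _) (htσ k)).trans_eq (by norm_num)
  have hexp {s : ℝ} (hs : |s| * H < 1) :
      Integrable (fun ω ↦ exp (s * (∑ k, η k) ω)) ℙ :=
    hindep.integrable_exp_mul_sum hmeas fun k _ ↦
      integrable_exp_mul_of_bernstein_sub_integral (hB k) (hmeas k).aemeasurable hH.le hs
  have hmgf := hindep.sq_mgf_sum_le hmeas univ fun k _ ↦
    sq_mgf_le_mgf_two_mul_of_bernstein_sub_integral (hint k) (hB k) hH.le htH' (htV k)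
  simp only [mgf, Finset.sum_apply] at hexp hmgf
  exact ⟨hexp (by linarith), hexp (by rw [abs_mul, abs_two]; linarith), hmgf⟩
end
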